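/- For any subset F of the Heisenberg group H^n, the t-convex hull t-co(F) = {p ∈ H^n : p ∈ L_{p₁,p₂} for some p₁, p₂ ∈ F with z_{p₁} = z_{p₂}} contains F and satisfies diam(t-co F) = diam F with respect to the Carnot-Carathéodory distance. -/

import Mathlib

open scoped Real ENNReal
open MeasureTheory

noncomputable section

/-- The Heisenberg group `ℍⁿ`, identified with `ℂⁿ × ℝ` (with the Euclidean `ℓ²` norm on
the `ℂⁿ` factor). -/
abbrev Heis (n : ℕ) : Type := EuclideanSpace ℂ (Fin n) × ℝ

/-- Borel σ-algebra on `ℂⁿ`. -/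
instance (n : ℕ) : MeasurableSpace (EuclideanSpace ℂ (Fin n)) := borel _

instance (n : ℕ) : BorelSpace (EuclideanSpace ℂ (Fin n)) := ⟨rfl⟩

/-- Lebesgue measure on `ℂⁿ`. -/
instance (n : ℕ) : MeasureSpace (EuclideanSpace ℂ (Fin n)) :=
  ⟨Measure.map ((WithLp.equiv 2 (Fin n → ℂ)).symm) volume⟩

namespace Heis

/-- The Hermitian product `z ⬝ conj w = ∑ zⱼ conj(wⱼ)`. -/
def herm {n : ℕ} (z w : EuclideanSpace ℂ (Fin n)) : ℂ :=
  ∑ j, z j * (starRingEnd ℂ) (w j)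

/-- The Heisenberg group law `[z,t]·[z',t'] = [z+z', t+t'+2 Im (z ⬝ conj z')]`. -/
def mul {n : ℕ} (p q : Heis n) : Heis n :=
  (p.1 + q.1, p.2 + q.2 + 2 * (herm p.1 q.1).im)

/-- Dilations `δ_λ [z,t] = [λ z, λ² t]`. -/
def dilation {n : ℕ} (l : ℝ) (p : Heis n) : Heis n := (l • p.1, l ^ 2 * p.2)

/-- A `C¹` horizontal curve in the Heisenberg group: at every point the tangent vector lies
in the horizontal subbundle spanned by the left-invariant fields
`X_j = ∂_{x_j} + 2 y_j ∂_t`, `Y_j = ∂_{y_j} - 2 x_j ∂_t`, which amounts to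
`t'(s) = 2 Im (z(s) ⬝ conj z'(s))`. -/
structure HorizCurve (n : ℕ) where
  z : ℝ → EuclideanSpace ℂ (Fin n)
  t : ℝ → ℝ
  z' : ℝ → EuclideanSpace ℂ (Fin n)
  hz : ∀ s : ℝ, HasDerivAt z (z' s) s
  ht : ∀ s : ℝ, HasDerivAt t (2 * (herm (z s) (z' s)).im) s
  hz' : Continuous z'

/-- The sub-Riemannian length of a horizontal curve (the metric `g` makes the horizontal
frame orthonormal, so the length is the integral of the Euclidean norm of `z'`). -/
def HorizCurve.length {n : ℕ} (γ : HorizCurve n) : ℝ :=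
  ∫ s in (0:ℝ)..1, ‖γ.z' s‖

/-- The Carnot–Carathéodory distance: the infimum of lengths of horizontal curves
joining `p` to `q`. -/
def ccDist {n : ℕ} (p q : Heis n) : ℝ :=
  sInf { L : ℝ | ∃ γ : HorizCurve n, γ.z 0 = p.1 ∧ γ.t 0 = p.2 ∧
      γ.z 1 = q.1 ∧ γ.t 1 = q.2 ∧ L = γ.length }

/-- Open CC-ball. -/
def ccBall {n : ℕ} (p : Heis n) (r : ℝ) : Set (Heis n) := { q | ccDist p q < r }

/-- Closed CC-ball. -/
def ccClosedBall {n : ℕ} (p : Heis n) (r : ℝ) : Set (Heis n) := { q | ccDist p q ≤ r }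

/-- CC-diameter of a set. -/
def ccDiam {n : ℕ} (F : Set (Heis n)) : ℝ :=
  sSup { r : ℝ | ∃ p ∈ F, ∃ q ∈ F, r = ccDist p q }

/-- A set is CC-bounded if the pairwise CC-distances of its points are bounded. -/
def ccBounded {n : ℕ} (F : Set (Heis n)) : Prop :=
  ∃ M : ℝ, ∀ p ∈ F, ∀ q ∈ F, ccDist p q ≤ M

/-- The vertical segment joining two points with the same `ℂⁿ`-component. -/
def vseg {n : ℕ} (p q : Heis n) : Set (Heis n) :=
  { x | x.1 = p.1 ∧ x.2 ∈ Set.uIcc p.2 q.2 }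

/-- The `t`-convex hull of a set. -/
def tco {n : ℕ} (F : Set (Heis n)) : Set (Heis n) :=
  { x | ∃ p₁ ∈ F, ∃ p₂ ∈ F, p₁.1 = p₂.1 ∧ x ∈ vseg p₁ p₂ }

/-- A set is `t`-convex if it contains the vertical segment joining any two of its points
having the same `ℂⁿ`-component. -/
def TConvex {n : ℕ} (E : Set (Heis n)) : Prop :=
  ∀ p ∈ E, ∀ q ∈ E, p.1 = q.1 → vseg p q ⊆ E

/-- The rotation `r_θ [z,t] = [(e^{iθ₁} z₁, …, e^{iθₙ} zₙ), t]`. -/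
def rot {n : ℕ} (θ : Fin n → ℝ) (p : Heis n) : Heis n :=
  ((WithLp.equiv 2 (Fin n → ℂ)).symm fun j => Complex.exp ((θ j : ℂ) * Complex.I) * p.1 j,
    p.2)

/-- Rotationally invariant sets: the class `𝓡`. -/
def RotInvariant {n : ℕ} (F : Set (Heis n)) : Prop :=
  ∀ θ : Fin n → ℝ, rot θ '' F ⊆ F

/-- The reflection `σ [z,t] = [conj z, t]`. -/
def sigmaRefl {n : ℕ} (p : Heis n) : Heis n :=
  ((WithLp.equiv 2 (Fin n → ℂ)).symm fun j => (starRingEnd ℂ) (p.1 j), p.2)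

/-- The Steiner symmetrization of a set with respect to the `ℂⁿ`-plane. -/
def steiner {n : ℕ} (F : Set (Heis n)) : Set (Heis n) :=
  { x | x.1 ∈ Prod.fst '' F ∧
      2 * |x.2| ≤ (volume { s : ℝ | ((x.1, s) : Heis n) ∈ F }).toReal }

/-- The isodiametric constant `C_I`. -/
def CI (n : ℕ) : ℝ :=
  sSup { x : ℝ | ∃ F : Set (Heis n), ccBounded F ∧ 0 < ccDiam F ∧
    x = (volume F).toReal / (ccDiam F) ^ (2 * n + 2) }

/-- The isodiametric constant `C_{I,𝓡}` for the restricted problem in the class `𝓡`. -/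
def CIR (n : ℕ) : ℝ :=
  sSup { x : ℝ | ∃ F : Set (Heis n), RotInvariant F ∧ ccBounded F ∧ 0 < ccDiam F ∧
    x = (volume F).toReal / (ccDiam F) ^ (2 * n + 2) }

end Heis

/-
A point of `tco F` lies on a vertical segment between two points of `F`, so it suffices that
`d(p, q) ≤ max (d(p, q₁)) (d(p, q₂))` for `q` on the vertical segment `[q₁, q₂]`, and symmetrically
in the first argument. Take almost minimizing horizontal curves from `p` to `q₁` and to `q₂`.
The affine combinations of their `ℂⁿ`-parts lift to horizontal curves from `p` to points above
`q.1`; their lengths are at most the larger of the two lengths, and their vertical displacement is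
a quadratic polynomial in the parameter, so by the intermediate value theorem one of them ends at
`q`. The same interpolation, between a segment plus a large loop of either orientation, shows that
any two points are joined by a horizontal curve when `n > 0`; for `n = 0` the distance vanishes.
-/

namespace Heis

open Set Real

variable {n : ℕ}

lemma herm_eq_inner (z w : EuclideanSpace ℂ (Fin n)) : herm z w = inner ℂ w z := by
  simp [herm, PiLp.inner_apply]

@[fun_prop]
lemma continuous_herm {z w : ℝ → EuclideanSpace ℂ (Fin n)} (hz : Continuous z)
    (hw : Continuous w) : Continuous fun s => herm (z s) (w s) := by
  simp only [herm_eq_inner]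
  exact hw.inner hz

/-- The increase of the `t`-coordinate along a horizontal curve with `ℂⁿ`-part `z`. -/
def vertDisp (z z' : ℝ → EuclideanSpace ℂ (Fin n)) : ℝ :=
  ∫ s in (0 : ℝ)..1, 2 * (herm (z s) (z' s)).im

lemma HorizCurve.continuous_z (γ : HorizCurve n) : Continuous γ.z :=
  continuous_iff_continuousAt.2 fun s => (γ.hz s).continuousAt

lemma HorizCurve.t_one (γ : HorizCurve n) : γ.t 1 = γ.t 0 + vertDisp γ.z γ.z' := by
  have := γ.continuous_z
  have := γ.hz'
  rw [vertDisp, intervalIntegral.integral_eq_sub_of_hasDerivAt (fun s _ => γ.ht s)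
    (Continuous.intervalIntegrable (by fun_prop) 0 1)]
  ring

def HorizCurve.lift (z z' : ℝ → EuclideanSpace ℂ (Fin n)) (hz : ∀ s, HasDerivAt z (z' s) s)
    (hz' : Continuous z') (t₀ : ℝ) : HorizCurve n where
  z := z
  t s := t₀ + ∫ u in (0 : ℝ)..s, 2 * (herm (z u) (z' u)).im
  z' := z'
  hz := hz
  ht s := by
    have : Continuous z := continuous_iff_continuousAt.2 fun u => (hz u).continuousAt
    have hc : Continuous fun u => 2 * (herm (z u) (z' u)).im := by fun_prop
    exact ((hc.integral_hasStrictDerivAt 0 s).hasDerivAt).const_add t₀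
  hz' := hz'

section lift

variable {z z' : ℝ → EuclideanSpace ℂ (Fin n)} {hz : ∀ s, HasDerivAt z (z' s) s}
  {hz' : Continuous z'} {t₀ : ℝ}

@[simp] lemma HorizCurve.lift_z : (HorizCurve.lift z z' hz hz' t₀).z = z := rfl

@[simp] lemma HorizCurve.lift_z' : (HorizCurve.lift z z' hz hz' t₀).z' = z' := rfl

@[simp] lemma HorizCurve.lift_t_zero : (HorizCurve.lift z z' hz hz' t₀).t 0 = t₀ := by
  simp [HorizCurve.lift]

lemma HorizCurve.lift_t_one : (HorizCurve.lift z z' hz hz' t₀).t 1 = t₀ + vertDisp z z' := rfl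

end lift

lemma exists_vertDisp_add_smul {z z' y y' : ℝ → EuclideanSpace ℂ (Fin n)} (hz : Continuous z)
    (hz' : Continuous z') (hy : Continuous y) (hy' : Continuous y') :
    ∃ B : ℝ, ∀ c : ℝ, vertDisp (fun s => z s + c • y s) (fun s => z' s + c • y' s) =
      vertDisp z z' + c * B + c ^ 2 * vertDisp y y' := by
  set f : (ℝ → EuclideanSpace ℂ (Fin n)) → (ℝ → EuclideanSpace ℂ (Fin n)) → ℝ → ℝ :=
    fun u v s => 2 * (herm (u s) (v s)).im
  have hf : ∀ {u v}, Continuous u → Continuous v → IntervalIntegrable (f u v) volume 0 1 :=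
    fun hu hv => Continuous.intervalIntegrable (by fun_prop) 0 1
  refine ⟨∫ s in (0 : ℝ)..1, (f z y' s + f y z' s), fun c => ?_⟩
  have hpt : ∀ s, 2 * (herm (z s + c • y s) (z' s + c • y' s)).im =
      f z z' s + (c * (f z y' s + f y z' s) + c ^ 2 * f y y' s) := by
    intro s
    simp only [f, herm_eq_inner, inner_add_left, inner_add_right, ← Complex.coe_smul,
      inner_smul_left, inner_smul_right, Complex.add_im, Complex.conj_ofReal,
      Complex.im_ofReal_mul]
    ring
  simp only [vertDisp, hpt]
  rw [intervalIntegral.integral_add (hf hz hz'), intervalIntegral.integral_add,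
    intervalIntegral.integral_const_mul]
  · simp only [f, intervalIntegral.integral_const_mul]
    ring
  · exact ((hf hz hy').add (hf hy hz')).const_mul c
  · exact (hf hy hy').const_mul _
  · exact (((hf hz hy').add (hf hy hz')).const_mul c).add ((hf hy hy').const_mul _)

lemma HorizCurve.length_nonneg (γ : HorizCurve n) : 0 ≤ γ.length :=
  intervalIntegral.integral_nonneg zero_le_one fun _ _ => norm_nonneg _

lemma length_lift_add_smul_sub_le (γ₁ γ₂ : HorizCurve n) {l : ℝ} (hl : l ∈ Icc (0 : ℝ) 1)
    (hz hz' t₀) :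
    (HorizCurve.lift (fun s => γ₁.z s + l • (γ₂.z s - γ₁.z s))
      (fun s => γ₁.z' s + l • (γ₂.z' s - γ₁.z' s)) hz hz' t₀).length ≤
      max γ₁.length γ₂.length := by
  have h₁ := γ₁.hz'.norm
  have h₂ := γ₂.hz'.norm
  have hpt : ∀ s, ‖γ₁.z' s + l • (γ₂.z' s - γ₁.z' s)‖ ≤ (1 - l) * ‖γ₁.z' s‖ + l * ‖γ₂.z' s‖ := by
    intro s
    rw [show γ₁.z' s + l • (γ₂.z' s - γ₁.z' s) = (1 - l) • γ₁.z' s + l • γ₂.z' s by module]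
    refine (norm_add_le _ _).trans_eq ?_
    rw [norm_smul, norm_smul, Real.norm_of_nonneg (sub_nonneg.2 hl.2), Real.norm_of_nonneg hl.1]
  calc _ ≤ ∫ s in (0 : ℝ)..1, ((1 - l) * ‖γ₁.z' s‖ + l * ‖γ₂.z' s‖) :=
        intervalIntegral.integral_mono_on zero_le_one (hz'.norm.intervalIntegrable 0 1)
          (Continuous.intervalIntegrable (by fun_prop) 0 1) fun s _ => hpt s
    _ = (1 - l) * γ₁.length + l * γ₂.length := by
        rw [intervalIntegral.integral_add (Continuous.intervalIntegrable (by fun_prop) 0 1)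
            (Continuous.intervalIntegrable (by fun_prop) 0 1),
          intervalIntegral.integral_const_mul, intervalIntegral.integral_const_mul]
        rfl
    _ ≤ max γ₁.length γ₂.length := by
        nlinarith [le_max_left γ₁.length γ₂.length, le_max_right γ₁.length γ₂.length, hl.1, hl.2]

/-- Interpolate the `ℂⁿ`-parts affinely: the vertical displacement is quadratic, hence
continuous, in the parameter, while the length stays below the larger of the two. -/
theorem exists_horizCurve_of_mem_uIcc_vertDisp (γ₁ γ₂ : HorizCurve n) (h0 : γ₁.z 0 = γ₂.z 0)
    (h1 : γ₁.z 1 = γ₂.z 1) (t₀ : ℝ) {d : ℝ}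
    (hd : d ∈ uIcc (vertDisp γ₁.z γ₁.z') (vertDisp γ₂.z γ₂.z')) :
    ∃ γ : HorizCurve n, γ.z 0 = γ₁.z 0 ∧ γ.z 1 = γ₁.z 1 ∧ γ.t 0 = t₀ ∧ γ.t 1 = t₀ + d ∧
      γ.length ≤ max γ₁.length γ₂.length := by
  obtain ⟨B, hB⟩ := exists_vertDisp_add_smul (y := fun s => γ₂.z s - γ₁.z s)
    (y' := fun s => γ₂.z' s - γ₁.z' s) γ₁.continuous_z γ₁.hz'
    (γ₂.continuous_z.sub γ₁.continuous_z) (γ₂.hz'.sub γ₁.hz')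
  set C := vertDisp (fun s => γ₂.z s - γ₁.z s) fun s => γ₂.z' s - γ₁.z' s
  have hend : vertDisp γ₂.z γ₂.z' = vertDisp γ₁.z γ₁.z' + 1 * B + 1 ^ 2 * C := by
    rw [← hB]
    simp
  obtain ⟨l, hl, hld⟩ : ∃ l ∈ uIcc (0 : ℝ) 1, vertDisp γ₁.z γ₁.z' + l * B + l ^ 2 * C = d :=
    intermediate_value_uIcc (by fun_prop) (by rw [hend] at hd; simpa using hd)
  rw [uIcc_of_le zero_le_one] at hl
  have hz : ∀ s, HasDerivAt (fun s => γ₁.z s + l • (γ₂.z s - γ₁.z s))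
      (γ₁.z' s + l • (γ₂.z' s - γ₁.z' s)) s :=
    fun s => (γ₁.hz s).add (((γ₂.hz s).sub (γ₁.hz s)).const_smul l)
  have hz' : Continuous fun s => γ₁.z' s + l • (γ₂.z' s - γ₁.z' s) := by
    have := γ₁.hz'; have := γ₂.hz'; fun_prop
  refine ⟨HorizCurve.lift _ _ hz hz' t₀, by simp [h0], by simp [← h1], by simp, ?_,
    length_lift_add_smul_sub_le γ₁ γ₂ hl hz hz' t₀⟩
  rw [HorizCurve.lift_t_one, hB, hld]

/-- For `σ = 1`, the unit circle about `-1` run once counterclockwise from `0`; `σ` scales the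
imaginary part. -/
def loop (σ s : ℝ) : ℂ :=
  ((cos (2 * π * s) - 1 : ℝ) : ℂ) + ((σ * sin (2 * π * s) : ℝ) : ℂ) * Complex.I

def loopDeriv (σ s : ℝ) : ℂ :=
  ((-(2 * π) * sin (2 * π * s) : ℝ) : ℂ) + ((σ * (2 * π) * cos (2 * π * s) : ℝ) : ℂ) * Complex.I

lemma hasDerivAt_loop (σ s : ℝ) : HasDerivAt (loop σ) (loopDeriv σ s) s := by
  have hθ : HasDerivAt (fun s : ℝ => 2 * π * s) (2 * π) s := by
    simpa using (hasDerivAt_id s).const_mul (2 * π)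
  have hc := ((hasDerivAt_cos _).comp s hθ).sub_const 1
  have hs := ((hasDerivAt_sin _).comp s hθ).const_mul σ
  refine (hc.ofReal_comp.add (hs.ofReal_comp.mul_const Complex.I)).congr_deriv ?_
  simp only [loopDeriv]
  push_cast
  ring

lemma continuous_loopDeriv (σ : ℝ) : Continuous (loopDeriv σ) := by
  unfold loopDeriv; fun_prop

@[simp] lemma loop_zero (σ : ℝ) : loop σ 0 = 0 := by simp [loop]

@[simp] lemma loop_one (σ : ℝ) : loop σ 1 = 0 := by simp [loop]

/-- `-4 ‖e‖²` times the signed area `πσ` enclosed by `loop σ`. -/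
lemma vertDisp_loop_smul (σ : ℝ) (e : EuclideanSpace ℂ (Fin n)) :
    vertDisp (fun s => loop σ s • e) (fun s => loopDeriv σ s • e) = -(4 * π * σ * ‖e‖ ^ 2) := by
  have hpt : ∀ s, 2 * (herm (loop σ s • e) (loopDeriv σ s • e)).im =
      4 * π * σ * ‖e‖ ^ 2 * (cos (2 * π * s) - 1) := by
    intro s
    have he : inner ℂ e e = ((‖e‖ ^ 2 : ℝ) : ℂ) := by simp
    rw [herm_eq_inner, inner_smul_left, inner_smul_right, he, ← mul_assoc, Complex.im_mul_ofReal]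
    simp only [loop, loopDeriv, Complex.mul_im, Complex.mul_re, Complex.add_re, Complex.add_im,
      Complex.ofReal_re, Complex.ofReal_im, Complex.I_re, Complex.I_im, Complex.conj_re,
      Complex.conj_im]
    linear_combination (-(4 * π * σ * ‖e‖ ^ 2)) * sin_sq_add_cos_sq (2 * π * s)
  have hG : ∀ s, HasDerivAt (fun s => 2 * σ * ‖e‖ ^ 2 * sin (2 * π * s) - 4 * π * σ * ‖e‖ ^ 2 * s)
      (4 * π * σ * ‖e‖ ^ 2 * (cos (2 * π * s) - 1)) s := by
    intro s
    have hθ : HasDerivAt (fun s : ℝ => 2 * π * s) (2 * π) s := by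
      simpa using (hasDerivAt_id s).const_mul (2 * π)
    refine ((((hasDerivAt_sin _).comp s hθ).const_mul (2 * σ * ‖e‖ ^ 2)).sub
      ((hasDerivAt_id' s).const_mul (4 * π * σ * ‖e‖ ^ 2))).congr_deriv ?_
    ring
  simp only [vertDisp, hpt]
  rw [intervalIntegral.integral_eq_sub_of_hasDerivAt (fun s _ => hG s)
    (Continuous.intervalIntegrable (by fun_prop) 0 1)]
  simp

lemma exists_add_mul_sub_mul_sq_le (a b m : ℝ) {c : ℝ} (hc : 0 < c) :
    ∃ x : ℝ, a + b * x - c * x ^ 2 ≤ m := by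
  set x := max |a - m| ((|b| + 1) / c)
  have hx : |a - m| ≤ x := le_max_left _ _
  have hcx : |b| + 1 ≤ c * x := by
    rw [← div_le_iff₀' hc]
    exact le_max_right _ _
  refine ⟨x, ?_⟩
  nlinarith [le_abs_self (a - m), le_abs_self b, neg_abs_le b, abs_nonneg (a - m)]

/-- Take the segment from `a` to `b` plus `c • loop σ • e`: the vertical displacement is
quadratic in `c` with leading coefficient `-4πσ‖e‖²`. -/
theorem exists_horizCurve_smul_vertDisp_le (hn : 0 < n) (a b : EuclideanSpace ℂ (Fin n))
    {σ : ℝ} (hσ : σ ≠ 0) (m : ℝ) :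
    ∃ γ : HorizCurve n, γ.z 0 = a ∧ γ.z 1 = b ∧ σ * vertDisp γ.z γ.z' ≤ m := by
  have : Nonempty (Fin n) := ⟨⟨0, hn⟩⟩
  obtain ⟨e, he⟩ := exists_ne (0 : EuclideanSpace ℂ (Fin n))
  obtain ⟨B, hB⟩ := exists_vertDisp_add_smul (z := fun s => a + s • (b - a))
    (z' := fun _ => b - a) (y := fun s => loop σ s • e) (y' := fun s => loopDeriv σ s • e)
    (by fun_prop) continuous_const
    (continuous_iff_continuousAt.2 fun s => (hasDerivAt_loop σ s).continuousAt.smul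
      continuousAt_const)
    ((continuous_loopDeriv σ).smul continuous_const)
  obtain ⟨c, hc⟩ := exists_add_mul_sub_mul_sq_le (σ * vertDisp (fun s => a + s • (b - a))
    (fun _ => b - a)) (σ * B) m (c := 4 * π * σ ^ 2 * ‖e‖ ^ 2) (by positivity)
  have hz : ∀ s, HasDerivAt (fun s => a + s • (b - a) + c • (loop σ s • e))
      (b - a + c • (loopDeriv σ s • e)) s := fun s => by
    refine ((((hasDerivAt_id' s).smul_const (b - a)).const_add a).add
      (((hasDerivAt_loop σ s).smul_const e).const_smul c)).congr_deriv ?_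
    rw [one_smul]
  refine ⟨HorizCurve.lift _ _ hz (continuous_const.add
    (((continuous_loopDeriv σ).smul continuous_const).const_smul c)) 0,
    by simp, by simp, ?_⟩
  simp only [HorizCurve.lift_z, HorizCurve.lift_z', hB, vertDisp_loop_smul]
  linear_combination hc

lemma ccDist_nonneg (p q : Heis n) : 0 ≤ ccDist p q :=
  Real.sInf_nonneg <| by rintro _ ⟨γ, -, -, -, -, rfl⟩; exact γ.length_nonneg

lemma ccDist_le_length {p q : Heis n} {γ : HorizCurve n} (h0 : γ.z 0 = p.1) (h0' : γ.t 0 = p.2)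
    (h1 : γ.z 1 = q.1) (h1' : γ.t 1 = q.2) : ccDist p q ≤ γ.length :=
  csInf_le ⟨0, by rintro _ ⟨γ, -, -, -, -, rfl⟩; exact γ.length_nonneg⟩ ⟨γ, h0, h0', h1, h1', rfl⟩

/-- In `ℍ⁰ = ℝ` horizontal curves are constant, so `ccDist` vanishes (when no curve joins
the two points, `sInf ∅ = 0`). -/
lemma ccDist_nonpos_of_dim_zero (p q : Heis 0) : ccDist p q ≤ 0 :=
  Real.sInf_nonpos <| by
    rintro _ ⟨γ, -, -, -, -, rfl⟩
    simp [HorizCurve.length, fun s => Subsingleton.elim (γ.z' s) 0]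

theorem exists_horizCurve_joining (hn : 0 < n) (p q : Heis n) :
    ∃ γ : HorizCurve n, γ.z 0 = p.1 ∧ γ.t 0 = p.2 ∧ γ.z 1 = q.1 ∧ γ.t 1 = q.2 := by
  obtain ⟨γ₁, h₁0, h₁1, h₁⟩ := exists_horizCurve_smul_vertDisp_le hn p.1 q.1 one_ne_zero (q.2 - p.2)
  obtain ⟨γ₂, h₂0, h₂1, h₂⟩ := exists_horizCurve_smul_vertDisp_le hn p.1 q.1
    (neg_ne_zero.2 one_ne_zero) (-(q.2 - p.2))
  obtain ⟨γ, hz0, hz1, ht0, ht1, -⟩ := exists_horizCurve_of_mem_uIcc_vertDisp γ₁ γ₂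
    (h₁0.trans h₂0.symm) (h₁1.trans h₂1.symm) p.2 (d := q.2 - p.2)
    (mem_uIcc.2 (Or.inl ⟨by linarith, by linarith⟩))
  exact ⟨γ, hz0.trans h₁0, ht0, hz1.trans h₁1, by rw [ht1]; ring⟩

lemma exists_length_lt_ccDist_add (hn : 0 < n) (p q : Heis n) {ε : ℝ} (hε : 0 < ε) :
    ∃ γ : HorizCurve n, γ.z 0 = p.1 ∧ γ.t 0 = p.2 ∧ γ.z 1 = q.1 ∧ γ.t 1 = q.2 ∧
      γ.length < ccDist p q + ε := by
  obtain ⟨γ, h0, h0', h1, h1'⟩ := exists_horizCurve_joining hn p q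
  obtain ⟨_, ⟨γ, h0, h0', h1, h1', rfl⟩, hlt⟩ := Real.lt_sInf_add_pos (s := {L | ∃ γ : HorizCurve n,
    γ.z 0 = p.1 ∧ γ.t 0 = p.2 ∧ γ.z 1 = q.1 ∧ γ.t 1 = q.2 ∧ L = γ.length})
    ⟨_, γ, h0, h0', h1, h1', rfl⟩ hε
  exact ⟨γ, h0, h0', h1, h1', hlt⟩

theorem ccDist_le_max_of_sub_mem_uIcc {a a₁ a₂ b b₁ b₂ : Heis n} (ha₁ : a₁.1 = a.1)
    (ha₂ : a₂.1 = a.1) (hb₁ : b₁.1 = b.1) (hb₂ : b₂.1 = b.1)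
    (h : b.2 - a.2 ∈ uIcc (b₁.2 - a₁.2) (b₂.2 - a₂.2)) :
    ccDist a b ≤ max (ccDist a₁ b₁) (ccDist a₂ b₂) := by
  rcases n.eq_zero_or_pos with rfl | hn
  · exact (ccDist_nonpos_of_dim_zero a b).trans ((ccDist_nonneg a₁ b₁).trans (le_max_left _ _))
  refine le_of_forall_pos_le_add fun ε hε => ?_
  obtain ⟨γ₁, h₁0, h₁0', h₁1, h₁1', hγ₁⟩ := exists_length_lt_ccDist_add hn a₁ b₁ hε
  obtain ⟨γ₂, h₂0, h₂0', h₂1, h₂1', hγ₂⟩ := exists_length_lt_ccDist_add hn a₂ b₂ hε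
  have hd₁ : vertDisp γ₁.z γ₁.z' = b₁.2 - a₁.2 := by linarith [γ₁.t_one]
  have hd₂ : vertDisp γ₂.z γ₂.z' = b₂.2 - a₂.2 := by linarith [γ₂.t_one]
  obtain ⟨γ, hz0, hz1, ht0, ht1, hlen⟩ := exists_horizCurve_of_mem_uIcc_vertDisp γ₁ γ₂
    (by rw [h₁0, h₂0, ha₁, ha₂]) (by rw [h₁1, h₂1, hb₁, hb₂]) a.2 (by rwa [hd₁, hd₂])
  calc ccDist a b ≤ γ.length := ccDist_le_length (hz0.trans (h₁0.trans ha₁)) ht0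
        (hz1.trans (h₁1.trans hb₁)) (by rw [ht1]; ring)
    _ ≤ max γ₁.length γ₂.length := hlen
    _ ≤ max (ccDist a₁ b₁) (ccDist a₂ b₂) + ε := by
        rw [← max_add_add_right]
        exact max_le_max hγ₁.le hγ₂.le

lemma ccDist_le_max_of_mem_vseg_right {p p₁ p₂ q : Heis n} (h12 : p₁.1 = p₂.1)
    (hq : q ∈ vseg p₁ p₂) : ccDist p q ≤ max (ccDist p p₁) (ccDist p p₂) :=
  ccDist_le_max_of_sub_mem_uIcc rfl rfl hq.1.symm (h12.symm.trans hq.1.symm)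
    (by rw [← image_sub_const_uIcc]; exact mem_image_of_mem _ hq.2)

lemma ccDist_le_max_of_mem_vseg_left {p p₁ p₂ q : Heis n} (h12 : p₁.1 = p₂.1)
    (hq : q ∈ vseg p₁ p₂) : ccDist q p ≤ max (ccDist p₁ p) (ccDist p₂ p) :=
  ccDist_le_max_of_sub_mem_uIcc hq.1.symm (h12.symm.trans hq.1.symm) rfl rfl
    (by rw [← image_const_sub_uIcc]; exact mem_image_of_mem _ hq.2)

lemma subset_tco (F : Set (Heis n)) : F ⊆ tco F :=
  fun p hp => ⟨p, hp, p, hp, rfl, rfl, left_mem_uIcc⟩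

lemma exists_ccDist_le_of_mem_tco {F : Set (Heis n)} {p q : Heis n} (hp : p ∈ tco F)
    (hq : q ∈ tco F) : ∃ p' ∈ F, ∃ q' ∈ F, ccDist p q ≤ ccDist p' q' := by
  obtain ⟨p₁, hp₁, p₂, hp₂, hp12, hp⟩ := hp
  obtain ⟨q₁, hq₁, q₂, hq₂, hq12, hq⟩ := hq
  obtain ⟨q', hq', hpq⟩ : ∃ q' ∈ F, ccDist p q ≤ ccDist p q' :=
    (le_max_iff.1 (ccDist_le_max_of_mem_vseg_right hq12 hq)).elim
      (fun h => ⟨q₁, hq₁, h⟩) (fun h => ⟨q₂, hq₂, h⟩)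
  rcases le_max_iff.1 (ccDist_le_max_of_mem_vseg_left (p := q') hp12 hp) with h | h
  exacts [⟨p₁, hp₁, q', hq', hpq.trans h⟩, ⟨p₂, hp₂, q', hq', hpq.trans h⟩]

end Heis

/-- The `t`-convex hull of a set contains it and has the same CC-diameter. -/
theorem stmt10 (n : ℕ) (F : Set (Heis n)) :
    F ⊆ Heis.tco F ∧ Heis.ccDiam (Heis.tco F) = Heis.ccDiam F := by
  refine ⟨Heis.subset_tco F, csSup_eq_csSup_of_forall_exists_le ?_ ?_⟩
  · rintro _ ⟨p, hp, q, hq, rfl⟩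
    obtain ⟨p', hp', q', hq', h⟩ := Heis.exists_ccDist_le_of_mem_tco hp hq
    exact ⟨_, ⟨p', hp', q', hq', rfl⟩, h⟩
  · rintro _ ⟨p, hp, q, hq, rfl⟩
    exact ⟨_, ⟨p, Heis.subset_tco F hp, q, Heis.subset_tco F hq, rfl⟩, le_rfl⟩
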